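/- Let A, B, C be rings, f : B → A and g : B → C ring homomorphisms, and φ : A → B a homomorphism of abelian groups such that the sequence A →(φ) B →(g) C → 0 is exact (i.e. g is surjective and the kernel of g equals the image of φ), and such that the composition f ∘ φ : A → A is multiplication by a central element a ∈ A which is not a zero-divisor. Then the pair (f, g) induces a ring isomorphism B ≅ A ×_{A/(a)} C, where A → A/(a) is the canonical projection and C → A/(a) is the ring homomorphism induced by the isomorphism C ≅ B/ker(g) followed by the map A → A/(a) induced by f. -/

import Mathlib

namespace AddMonoidHom

variable {A B C D : Type*} [AddGroup A] [AddGroup B] [AddGroup C] [AddGroup D]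

theorem injective_prod_of_ker_le_range {f : B →+ A} {g : B →+ C} {φ : A →+ B}
    (hker : g.ker ≤ φ.range) (hfφ : Function.Injective (f.comp φ)) :
    Function.Injective (f.prod g) := by
  refine (injective_iff_map_eq_zero _).2 fun b hb => ?_
  obtain ⟨hfb, hgb⟩ := Prod.ext_iff.1 hb
  obtain ⟨x, rfl⟩ := hker hgb
  have hx : x = 0 := hfφ (by simpa using hfb)
  rw [hx, map_zero]

/-- Every point of the fiber product `A ×_D C` lifts to `B`: lift the `C`-coordinate along `g`,
then correct the `A`-coordinate by an element of `φ(A)`, which `g` does not see. -/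
theorem exists_prod_apply_eq {f : B →+ A} {g : B →+ C} {φ : A →+ B} {p : A →+ D} {q : C →+ D}
    (hg : Function.Surjective g) (hgφ : ∀ x, g (φ x) = 0)
    (hpker : ∀ x, p x = 0 → ∃ y, x = f (φ y)) (hq : ∀ b, q (g b) = p (f b))
    {x : A} {c : C} (hxc : p x = q c) : ∃ b, f.prod g b = (x, c) := by
  obtain ⟨b, rfl⟩ := hg c
  obtain ⟨y, hy⟩ := hpker (x - f b) (by rw [map_sub, hxc, hq, sub_self])
  refine ⟨φ y + b, ?_⟩
  simp [← hy, hgφ]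

end AddMonoidHom

theorem gluing_lemma_fiber_product
    {A B C D : Type*} [Ring A] [Ring B] [Ring C] [Ring D]
    (f : B →+* A) (g : B →+* C) (φ : A →+ B)
    (hg : Function.Surjective g)
    (hexact : ∀ b : B, g b = 0 ↔ b ∈ Set.range φ)
    (a : A)
    (hnzd₁ : ∀ x : A, a * x = 0 → x = 0)
    (hfφ : ∀ x : A, f (φ x) = a * x)
    (p : A →+* D)
    (hpker : ∀ x : A, p x = 0 ↔ ∃ y : A, x = a * y)
    (q : C →+* D) (hq : ∀ b : B, q (g b) = p (f b)) :
    ∃ e : B ≃+* (RingHom.eqLocus (p.comp (RingHom.fst A C)) (q.comp (RingHom.snd A C))),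
      ∀ b : B, (e b : A × C) = (f b, g b) := by
  have hinj : Function.Injective ((f : B →+ A).prod (g : B →+ C)) := by
    refine AddMonoidHom.injective_prod_of_ker_le_range (φ := φ) (fun b hb => (hexact b).1 hb) ?_
    have hfφ' : ⇑((f : B →+ A).comp φ) = (a * ·) := funext hfφ
    exact hfφ' ▸ isLeftRegular_of_non_zero_divisor a hnzd₁
  let F := (f.prod g).codRestrict
    (RingHom.eqLocus (p.comp (RingHom.fst A C)) (q.comp (RingHom.snd A C))) fun b => (hq b).symm
  refine ⟨RingEquiv.ofBijective F ⟨fun b₁ b₂ h => hinj (congrArg Subtype.val h), ?_⟩, fun _ => rfl⟩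
  rintro ⟨⟨x, c⟩, hxc⟩
  obtain ⟨b, hb⟩ := AddMonoidHom.exists_prod_apply_eq (f := (f : B →+ A)) (g := (g : B →+ C))
    (p := (p : A →+ D)) (q := (q : C →+ D)) hg (fun y => (hexact _).2 ⟨y, rfl⟩)
    (fun x hx => by simpa [hfφ] using (hpker x).1 hx) hq hxc
  exact ⟨b, Subtype.ext hb⟩
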